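/- Define sequences by β₀ = 1 and for k ≥ 1, β_k = 𝟙·A^{k−1}·B where A and B are as in the previous context. Then Σ_{k≥0} β_k z^k · (1 − 3z − 3z² + z³) = 1 + z; i.e., the generating function of the walk counts in the weighted tree equals (1+z)/(1 − 3z − 3z² + z³). -/

import Mathlib

/-! The all-ones row vector satisfies `𝟙 A³ = 3 𝟙 A² + 3 𝟙 A - 𝟙`, and the first column of `A` is
`B`, so `β_k = 𝟙 Aᵏ e₁` for every `k ≥ 0` (including `β₀ = 𝟙 e₁ = 1`). Hence `β` obeys the linear
recurrence `β_{k+3} = 3 β_{k+2} + 3 β_{k+1} - β_k` from the start, and multiplying its generating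
function by `1 - 3z - 3z² + z³` leaves only terms of degree `< 3`, which
`β₀, β₁, β₂ = 1, 4, 15` make equal to `1 + z`. -/

def apat (i j : Fin 7) : ℚ :=
  if (i : ℕ) ≤ 3 ∧ ((j : ℕ) ≤ 2 ∨ (j : ℕ) = 4 ∨ (j : ℕ) = 5) then 1
  else if 1 ≤ (i : ℕ) ∧ (i : ℕ) ≤ 3 ∧ (j : ℕ) = 6 then 1
  else if 4 ≤ (i : ℕ) ∧ (j : ℕ) = 3 then 1 else 0

def AmatQ : Matrix (Fin 7) (Fin 7) ℚ := Matrix.of apat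

def Bvec : Fin 7 → ℚ := ![1, 1, 1, 1, 0, 0, 0]

/-- `𝟙 · A^k · B`. -/
def walk (k : ℕ) : ℚ := ∑ i, (AmatQ ^ k).mulVec Bvec i

open Matrix PowerSeries

section Recurrence

variable {R : Type*} [CommRing R]

theorem PowerSeries.mk_mul_eq_of_recurrence (f : ℕ → R) (a b c : R)
    (hf : ∀ n, f (n + 3) = a * f (n + 2) + b * f (n + 1) + c * f n) :
    mk f * (1 - C a * X - C b * X ^ 2 - C c * X ^ 3) =
      C (f 0) + C (f 1 - a * f 0) * X + C (f 2 - a * f 1 - b * f 0) * X ^ 2 := by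
  ext n
  rw [show mk f * (1 - C a * X - C b * X ^ 2 - C c * X ^ 3) =
      mk f - C a * (mk f * X ^ 1) - C b * (mk f * X ^ 2) - C c * (mk f * X ^ 3) by ring]
  simp only [map_add, map_sub, coeff_C_mul, coeff_mul_X_pow', coeff_mk, coeff_C]
  rcases n with _ | _ | _ | n
  iterate 3 simp
  simp only [show n + 1 + 1 + 1 = n + 3 by ring, hf]
  simp [show n + 3 - 1 = n + 2 by omega, show n + 3 - 2 = n + 1 by omega]
  ring

theorem Matrix.vecMul_pow_dotProduct_recurrence {n : Type*} [Fintype n] [DecidableEq n]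
    (A : Matrix n n R) (u v : n → R) (a b c : R)
    (h : u ᵥ* A ^ 3 = a • u ᵥ* A ^ 2 + b • u ᵥ* A + c • u) (k : ℕ) :
    u ᵥ* A ^ (k + 3) ⬝ᵥ v =
      a * (u ᵥ* A ^ (k + 2) ⬝ᵥ v) + b * (u ᵥ* A ^ (k + 1) ⬝ᵥ v) + c * (u ᵥ* A ^ k ⬝ᵥ v) := by
  have hpow : ∀ j, u ᵥ* A ^ (k + j) = u ᵥ* A ^ j ᵥ* A ^ k := fun j => by
    rw [vecMul_vecMul, ← pow_add, add_comm]
  rw [hpow 3, h, hpow 2, hpow 1, pow_one]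
  simp only [add_vecMul, smul_vecMul, add_dotProduct, smul_dotProduct, smul_eq_mul]

end Recurrence

lemma vecMul_AmatQ (v : Fin 7 → ℚ) : v ᵥ* AmatQ =
    let s := v 0 + v 1 + v 2 + v 3
    ![s, s, s, v 4 + v 5 + v 6, s, s, v 1 + v 2 + v 3] := by
  ext j; fin_cases j <;> simp [vecMul, dotProduct, Fin.sum_univ_seven, AmatQ, apat]

lemma ones_vecMul_AmatQ_pow_three :
    1 ᵥ* AmatQ ^ 3 = (3 : ℚ) • 1 ᵥ* AmatQ ^ 2 + (3 : ℚ) • 1 ᵥ* AmatQ + (-1 : ℚ) • 1 := by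
  simp only [pow_succ, pow_zero, one_mul, ← vecMul_vecMul, vecMul_AmatQ]
  ext j; fin_cases j <;> simp [cons_val] <;> norm_num

lemma AmatQ_mulVec_single_zero : AmatQ *ᵥ Pi.single 0 1 = Bvec := by
  ext i; fin_cases i <;> simp [AmatQ, apat, Bvec]

lemma walk_eq_ones_vecMul_pow_dotProduct (k : ℕ) :
    walk k = 1 ᵥ* AmatQ ^ (k + 1) ⬝ᵥ Pi.single 0 1 := by
  rw [walk, ← one_dotProduct, ← AmatQ_mulVec_single_zero, mulVec_mulVec, ← pow_succ,
    dotProduct_mulVec]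

/-- With `β₀ = 1` and `β_k = 𝟙·A^{k-1}·B` for `k ≥ 1`, the generating function
of the walk counts satisfies `(Σ β_k z^k)·(1 - 3z - 3z² + z³) = 1 + z`. -/
theorem stmt19 :
    PowerSeries.mk (fun k => if k = 0 then (1 : ℚ) else walk (k - 1)) *
      (1 - 3 * PowerSeries.X - 3 * PowerSeries.X ^ 2 + PowerSeries.X ^ 3) =
    1 + PowerSeries.X := by
  set β : ℕ → ℚ := fun k => 1 ᵥ* AmatQ ^ k ⬝ᵥ Pi.single 0 1
  have hβ : (fun k => if k = 0 then (1 : ℚ) else walk (k - 1)) = β := by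
    funext k
    rcases k with _ | k
    · simp [β]
    · simp [β, walk_eq_ones_vecMul_pow_dotProduct]
  have hrec := PowerSeries.mk_mul_eq_of_recurrence β 3 3 (-1)
    (vecMul_pow_dotProduct_recurrence _ _ _ _ _ _ ones_vecMul_AmatQ_pow_three)
  have hβ₀ : β 0 = 1 := by simp [β]
  have hβ₁ : β 1 = 4 := by simp [β, vecMul_AmatQ]; norm_num
  have hβ₂ : β 2 = 15 := by simp [β, pow_two, ← vecMul_vecMul, vecMul_AmatQ, cons_val]; norm_num
  have hpoly : (1 - 3 * X - 3 * X ^ 2 + X ^ 3 : ℚ⟦X⟧) =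
      1 - C 3 * X - C 3 * X ^ 2 - C (-1) * X ^ 3 := by
    simp only [map_ofNat, map_neg, map_one]; ring
  rw [hβ, hpoly, hrec, hβ₀, hβ₁, hβ₂]
  norm_num
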